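/- Let F be a unit vector in Im 𝕆 and let α, β ∈ T_F^{1,0} = {v ∈ F^⊥ ⊗ ℂ : F × v = iv}. Then α × β lies in T_F^{0,1}, i.e., F × (α × β) = −i (α × β). -/

import Mathlib

open scoped ComplexConjugate

/-- The standard complex-bilinear symmetric form on `ℂⁿ`. -/
noncomputable def Bform {n : ℕ} (u v : Fin n → ℂ) : ℂ := ∑ i, u i * v i

/-- Componentwise complex conjugation on `ℂⁿ`. -/
noncomputable def conjn {n : ℕ} (v : Fin n → ℂ) : Fin n → ℂ := fun i => conj (v i)

/-! Proof idea: the conjugation-compatible real structure forces `u × u = 0`: for real `u`, the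
vector `a = u × u` is real and the identities give `(a, a) = 0`, so `a = 0`; polarization then
makes `×` antisymmetric on all of `ℂⁿ`. Antisymmetry together with `(u, v × w) = (u × v, w)` shows
that two `i`-eigenvectors of `F × ·` are orthogonal, and the identity for
`u × (v × w) + (u × v) × w` at `(F, α, β)` then reads `F × (α × β) + i (α × β) = 0`. -/

lemma eq_neg_flip_of_apply_self_eq_zero {R M N : Type*} [CommRing R] [AddCommGroup M] [Module R M]
    [AddCommGroup N] [Module R N] (B : M →ₗ[R] M →ₗ[R] N) {x y : M} (hx : B x x = 0)
    (hy : B y y = 0) (hxy : B (x + y) (x + y) = 0) : B x y = -B y x := by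
  simp only [map_add, LinearMap.add_apply, hx, hy, zero_add, add_zero] at hxy
  exact eq_neg_of_add_eq_zero_right hxy

namespace Bform

variable {n : ℕ}

lemma comm (u v : Fin n → ℂ) : Bform u v = Bform v u := by
  simp only [Bform, mul_comm]

lemma smul_left (c : ℂ) (u v : Fin n → ℂ) : Bform (c • u) v = c * Bform u v := by
  simp only [Bform, Finset.mul_sum, Pi.smul_apply, smul_eq_mul, mul_assoc]

lemma neg_right (u v : Fin n → ℂ) : Bform u (-v) = -Bform u v := by
  simp only [Bform, Pi.neg_apply, mul_neg, Finset.sum_neg_distrib]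

lemma eq_zero_of_conjn_eq_self {r : Fin n → ℂ} (hr : conjn r = r) (h : Bform r r = 0) :
    r = 0 := by
  have him : ∀ i, (r i).im = 0 := fun i => Complex.conj_eq_iff_im.mp (congrFun hr i)
  have hsum : ∑ i, (r i).re * (r i).re = 0 := by
    simpa [Bform, Complex.re_sum, Complex.mul_re, him] using congrArg Complex.re h
  have hre := (Finset.sum_eq_zero_iff_of_nonneg fun i _ => mul_self_nonneg (r i).re).mp hsum
  funext i
  exact Complex.ext (mul_self_eq_zero.mp (hre i (Finset.mem_univ i))) (him i)

end Bform

lemma conjn_add {n : ℕ} (u v : Fin n → ℂ) : conjn (u + v) = conjn u + conjn v :=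
  funext fun _ => map_add _ _ _

lemma exists_conjn_eq_self_add_I_smul {n : ℕ} (u : Fin n → ℂ) :
    ∃ p q : Fin n → ℂ, conjn p = p ∧ conjn q = q ∧ u = p + Complex.I • q := by
  refine ⟨fun i => ((u i).re : ℂ), fun i => ((u i).im : ℂ), ?_, ?_, ?_⟩ <;> funext i
  · exact Complex.conj_ofReal _
  · exact Complex.conj_ofReal _
  · simp only [Pi.add_apply, Pi.smul_apply, smul_eq_mul]
    rw [mul_comm]
    exact (Complex.re_add_im (u i)).symm

section Cross

variable {n : ℕ} (cross : (Fin n → ℂ) →ₗ[ℂ] (Fin n → ℂ) →ₗ[ℂ] (Fin n → ℂ))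

lemma cross_self_eq_zero_of_conjn_eq_self
    (h1 : ∀ u v w, Bform u (cross v w) = Bform (cross u v) w)
    (h2 : ∀ u v w : Fin n → ℂ, cross u (cross v w) + cross (cross u v) w
        = (2 * Bform u w) • v - Bform u v • w - Bform v w • u)
    (hconj : ∀ u v, conjn (cross u v) = cross (conjn u) (conjn v))
    {u : Fin n → ℂ} (hu : conjn u = u) : cross u u = 0 := by
  set a := cross u u
  have hanti : cross u a = -cross a u :=
    eq_neg_of_add_eq_zero_left (by rw [h2 u u u]; module)
  have hself : Bform u (cross u a) = 0 := by
    have : Bform u (cross u a) = -Bform u (cross u a) := by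
      conv_rhs => rw [← Bform.neg_right, hanti, neg_neg, h1, Bform.comm]
    linear_combination this / 2
  refine Bform.eq_zero_of_conjn_eq_self (by rw [hconj, hu]) ?_
  rw [← h1, hself]

lemma cross_self_eq_zero
    (h1 : ∀ u v w, Bform u (cross v w) = Bform (cross u v) w)
    (h2 : ∀ u v w : Fin n → ℂ, cross u (cross v w) + cross (cross u v) w
        = (2 * Bform u w) • v - Bform u v • w - Bform v w • u)
    (hconj : ∀ u v, conjn (cross u v) = cross (conjn u) (conjn v))
    (u : Fin n → ℂ) : cross u u = 0 := by
  have hreal {p} (hp : conjn p = p) := cross_self_eq_zero_of_conjn_eq_self cross h1 h2 hconj hp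
  obtain ⟨p, q, hp, hq, rfl⟩ := exists_conjn_eq_self_add_I_smul u
  have hpq : cross p q = -cross q p :=
    eq_neg_flip_of_apply_self_eq_zero cross (hreal hp) (hreal hq)
      (hreal (by rw [conjn_add, hp, hq]))
  simp only [map_add, map_smul, LinearMap.add_apply, LinearMap.smul_apply, hreal hp, hreal hq,
    hpq]
  module

lemma cross_eq_neg_swap
    (h1 : ∀ u v w, Bform u (cross v w) = Bform (cross u v) w)
    (h2 : ∀ u v w : Fin n → ℂ, cross u (cross v w) + cross (cross u v) w
        = (2 * Bform u w) • v - Bform u v • w - Bform v w • u)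
    (hconj : ∀ u v, conjn (cross u v) = cross (conjn u) (conjn v))
    (u v : Fin n → ℂ) : cross u v = -cross v u :=
  eq_neg_flip_of_apply_self_eq_zero cross (cross_self_eq_zero cross h1 h2 hconj u)
    (cross_self_eq_zero cross h1 h2 hconj v) (cross_self_eq_zero cross h1 h2 hconj (u + v))

lemma Bform_eq_zero_of_cross_eigen (hanti : ∀ u v, cross u v = -cross v u)
    (h1 : ∀ u v w, Bform u (cross v w) = Bform (cross u v) w)
    {F α β : Fin n → ℂ} {a b : ℂ} (hab : a + b ≠ 0)
    (hα : cross F α = a • α) (hβ : cross F β = b • β) : Bform α β = 0 := by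
  have h : a * Bform α β = -(b * Bform α β) :=
    calc a * Bform α β = Bform (cross F α) β := by rw [hα, Bform.smul_left]
      _ = -Bform α (cross F β) := by rw [hanti, Bform.comm, Bform.neg_right, Bform.comm, h1]
      _ = -(b * Bform α β) := by rw [hβ, Bform.comm, Bform.smul_left, Bform.comm]
  exact (mul_eq_zero.mp (by linear_combination h : (a + b) * Bform α β = 0)).resolve_left hab

end Cross

theorem cross_of_onezero_in_zeroone_general
    (cross : (Fin 7 → ℂ) →ₗ[ℂ] (Fin 7 → ℂ) →ₗ[ℂ] (Fin 7 → ℂ))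
    (h1 : ∀ u v w, Bform u (cross v w) = Bform (cross u v) w)
    (h2 : ∀ u v w : Fin 7 → ℂ, cross u (cross v w) + cross (cross u v) w
        = (2 * Bform u w) • v - Bform u v • w - Bform v w • u)
    (hconj : ∀ u v, conjn (cross u v) = cross (conjn u) (conjn v))
    (F : Fin 7 → ℂ)
    (α β : Fin 7 → ℂ)
    (hαperp : Bform F α = 0) (hα : cross F α = Complex.I • α)
    (hβperp : Bform F β = 0) (hβ : cross F β = Complex.I • β) :
    cross F (cross α β) = (-Complex.I) • cross α β := by
  have hαβ : Bform α β = 0 :=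
    Bform_eq_zero_of_cross_eigen cross (cross_eq_neg_swap cross h1 h2 hconj) h1
      (by simp [← two_mul, Complex.I_ne_zero]) hα hβ
  have key := h2 F α β
  rw [hαperp, hβperp, hαβ, hα, map_smul, LinearMap.smul_apply] at key
  linear_combination (norm := module) key

/-- For F a real unit vector and α, β ∈ T_F^{1,0}, the product
α × β lies in T_F^{0,1}: F × (α × β) = −i (α × β). -/
theorem cross_of_onezero_in_zeroone
    (cross : (Fin 7 → ℂ) →ₗ[ℂ] (Fin 7 → ℂ) →ₗ[ℂ] (Fin 7 → ℂ))
    (h1 : ∀ u v w, Bform u (cross v w) = Bform (cross u v) w)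
    (h2 : ∀ u v w : Fin 7 → ℂ, cross u (cross v w) + cross (cross u v) w
        = (2 * Bform u w) • v - Bform u v • w - Bform v w • u)
    (hconj : ∀ u v, conjn (cross u v) = cross (conjn u) (conjn v))
    (F : Fin 7 → ℂ) (hFreal : conjn F = F) (hFunit : Bform F F = 1)
    (α β : Fin 7 → ℂ)
    (hαperp : Bform F α = 0) (hα : cross F α = Complex.I • α)
    (hβperp : Bform F β = 0) (hβ : cross F β = Complex.I • β) :
    cross F (cross α β) = (-Complex.I) • cross α β :=
  cross_of_onezero_in_zeroone_general cross h1 h2 hconj F α β hαperp hα hβperp hβ
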